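/- arXiv:2409.20534 — 3 statements merged into one kernel-verified Lean document; each statement's English description precedes it below -/
import Mathlib

section
/- Let $s_\theta : \mathbb{R}^n \to \mathbb{R}$ be an ICNN layer recursion with $\sigma_0 = 0$, $\sigma_{l+1} = \mathrm{ReLU}(W_l \sigma_l + V_l y + b_l)$ for $l = 0, \ldots, L-1$, where each $W_l$ has nonnegative entries ($W_0$ arbitrary since $\sigma_0 = 0$), and $s_\theta(y) = W_L \sigma_L + V_L y + b_L$. Then the optimal value of $\max_y \{c^\top y : s_\theta(y) \leq q\}$ equals the optimal value of the relaxed linear program $\max_{y, \sigma_1, \ldots, \sigma_L} \{c^\top y : \sigma_l \geq 0 \ \forall l, \ \sigma_{l+1} \geq W_l \sigma_l + V_l y + b_l \ \forall l, \ W_L \sigma_L + V_L y + b_L \leq q\}$, provided both problems are feasible and bounded. -/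
open Matrix

/-- The hidden-layer recursion of an input-convex neural network (ICNN):
`σ₀ = 0`, `σ_{l+1} = ReLU(W_l σ_l + V_l y + b_l)`. -/
def icnnSigma {d n : ℕ} (W : ℕ → Matrix (Fin d) (Fin d) ℝ)
    (V : ℕ → Matrix (Fin d) (Fin n) ℝ) (b : ℕ → Fin d → ℝ)
    (y : Fin n → ℝ) : ℕ → Fin d → ℝ
  | 0 => 0
  | l + 1 => fun i => max ((W l *ᵥ icnnSigma W V b y l + V l *ᵥ y + b l) i) 0

/-- Maximization of a linear function over the `q`-sublevel set of an ICNN equals the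
optimal value of its LP relaxation, provided both are feasible and bounded. -/
theorem icnn_relaxation_exact (d n L : ℕ)
    (W : ℕ → Matrix (Fin d) (Fin d) ℝ) (V : ℕ → Matrix (Fin d) (Fin n) ℝ)
    (b : ℕ → Fin d → ℝ) (WL : Fin d → ℝ) (VL : Fin n → ℝ) (bL q : ℝ)
    (c : Fin n → ℝ)
    (hW : ∀ l, 1 ≤ l → l < L → ∀ i j, 0 ≤ W l i j)
    (hWL : ∀ i, 0 ≤ WL i)
    (exact : Set ℝ)
    (hexact : exact = {t : ℝ | ∃ y : Fin n → ℝ,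
        WL ⬝ᵥ icnnSigma W V b y L + VL ⬝ᵥ y + bL ≤ q ∧ t = c ⬝ᵥ y})
    (relaxed : Set ℝ)
    (hrelaxed : relaxed = {t : ℝ | ∃ (y : Fin n → ℝ) (σ : ℕ → Fin d → ℝ),
        σ 0 = 0 ∧
        (∀ l, 1 ≤ l → l ≤ L → ∀ i, 0 ≤ σ l i) ∧
        (∀ l, l < L → ∀ i, (W l *ᵥ σ l + V l *ᵥ y + b l) i ≤ σ (l + 1) i) ∧
        WL ⬝ᵥ σ L + VL ⬝ᵥ y + bL ≤ q ∧ t = c ⬝ᵥ y})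
    (hne₁ : exact.Nonempty) (hbd₁ : BddAbove exact)
    (hne₂ : relaxed.Nonempty) (hbd₂ : BddAbove relaxed) :
    sSup exact = sSup relaxed := by
  have hset : exact = relaxed := by
    rw [hexact, hrelaxed]
    ext t
    constructor
    · rintro ⟨y, hq, ht⟩
      refine ⟨y, icnnSigma W V b y, rfl, ?_, ?_, hq, ht⟩
      · intro l hl _ i
        match l, hl with
        | (m + 1), _ => exact le_max_right _ _
      · intro l _ i
        exact le_max_left _ _
    · rintro ⟨y, σ, h0, hpos, hrec, hq, ht⟩
      refine ⟨y, ?_, ht⟩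
      have mono : ∀ l, l ≤ L → ∀ i, icnnSigma W V b y l i ≤ σ l i := by
        intro l
        induction l with
        | zero => intro _ i; rw [h0]; rfl
        | succ l ih =>
          intro hl i
          have hlL : l < L := hl
          have ih' := ih hlL.le
          have h1 : (W l *ᵥ icnnSigma W V b y l) i ≤ (W l *ᵥ σ l) i := by
            rcases Nat.eq_zero_or_pos l with h | h
            · subst h
              have : icnnSigma W V b y 0 = σ 0 := by rw [h0]; rfl
              rw [this]
            · simp only [mulVec, dotProduct]
              exact Finset.sum_le_sum fun j _ =>
                mul_le_mul_of_nonneg_left (ih' j) (hW l h hlL i j)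
          have h2 : (W l *ᵥ icnnSigma W V b y l + V l *ᵥ y + b l) i ≤ σ (l + 1) i := by
            have := hrec l hlL i
            simp only [Pi.add_apply] at this ⊢
            linarith
          have h3 : (0 : ℝ) ≤ σ (l + 1) i :=
            hpos (l + 1) (Nat.succ_le_succ (Nat.zero_le l)) hl i
          exact max_le h2 h3
      have hdot : WL ⬝ᵥ icnnSigma W V b y L ≤ WL ⬝ᵥ σ L := by
        simp only [dotProduct]
        exact Finset.sum_le_sum fun j _ =>
          mul_le_mul_of_nonneg_left (mono L le_rfl j) (hWL j)
      linarith
  rw [hset]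
end

section
/- Single-layer case of the ReLU relaxation equivalence: for $W \in \mathbb{R}^{1 \times d}$ with $W \geq 0$ entrywise, $V_0 \in \mathbb{R}^{d \times n}$, $b_0 \in \mathbb{R}^d$, $V_1 \in \mathbb{R}^{1 \times n}$, $b_1 \in \mathbb{R}$, $q \in \mathbb{R}$, and $c \in \mathbb{R}^n$: the set $\{y : W \,\mathrm{ReLU}(V_0 y + b_0) + V_1 y + b_1 \leq q\}$ equals the projection onto the $y$-coordinates of the polyhedron $\{(y, \sigma) : \sigma \geq 0, \ \sigma \geq V_0 y + b_0, \ W\sigma + V_1 y + b_1 \leq q\}$. -/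
open Matrix

/-- Single-layer ReLU relaxation: the sublevel set of
`y ↦ W ReLU(V₀ y + b₀) + V₁ y + b₁` equals the projection onto the `y`-coordinates of
the polyhedron `{(y, σ) : σ ≥ 0, σ ≥ V₀ y + b₀, Wσ + V₁ y + b₁ ≤ q}`. -/
theorem single_layer_relu_projection (n d : ℕ)
    (W : Fin d → ℝ) (hW : ∀ j, 0 ≤ W j)
    (V0 : Matrix (Fin d) (Fin n) ℝ) (b0 : Fin d → ℝ)
    (V1 : Fin n → ℝ) (b1 q : ℝ) :
    {y : Fin n → ℝ | W ⬝ᵥ (fun j => max ((V0 *ᵥ y + b0) j) 0) + V1 ⬝ᵥ y + b1 ≤ q}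
      = {y : Fin n → ℝ | ∃ σ : Fin d → ℝ,
          (∀ j, 0 ≤ σ j) ∧ (∀ j, (V0 *ᵥ y + b0) j ≤ σ j) ∧
          W ⬝ᵥ σ + V1 ⬝ᵥ y + b1 ≤ q} := by
  ext y
  simp only [Set.mem_setOf_eq]
  constructor
  · intro h
    exact ⟨fun j => max ((V0 *ᵥ y + b0) j) 0, fun j => le_max_right _ _,
      fun j => le_max_left _ _, h⟩
  · rintro ⟨σ, hσ0, hσle, hσq⟩
    refine le_trans (add_le_add_left (add_le_add_left ?_ _) _) hσq
    exact Finset.sum_le_sum fun j _ =>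
      mul_le_mul_of_nonneg_left (max_le (hσle j) (hσ0 j)) (hW j)
end

section
/- Split conformal coverage guarantee: let $S_1, \ldots, S_M, S_{M+1}$ be exchangeable real-valued random variables whose values are almost surely pairwise distinct, let $\alpha \in [\frac{1}{M+1}, 1)$, and let $q$ be the $\lceil (M+1)(1-\alpha) \rceil$-th smallest value among $S_1, \ldots, S_M$. Then $1 - \alpha \leq \mathbb{P}(S_{M+1} \leq q) \leq 1 - \alpha + \frac{1}{M+1}$. -/
open MeasureTheory

/-- The `k`-th smallest value (k-th order statistic, 1-indexed) of a finite family of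
reals. -/
noncomputable def kthSmallest {M : ℕ} (v : Fin M → ℝ) (k : ℕ) : ℝ :=
  sInf {t : ℝ | k ≤ (Finset.univ.filter fun i => v i ≤ t).card}

open Finset
open scoped ENNReal

lemma le_kthSmallest_iff {M : ℕ} (v : Fin M → ℝ) (k : ℕ) (hk1 : 1 ≤ k) (hkM : k ≤ M)
    (x : ℝ) :
    x ≤ kthSmallest v k ↔ (Finset.univ.filter fun i => v i < x).card < k := by
  have hM : 0 < M := lt_of_lt_of_le hk1 hkM
  constructor
  · intro hx
    by_contra hcard
    push_neg at hcard
    have hne : (Finset.univ.filter fun i => v i < x).Nonempty := by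
      rw [← Finset.card_pos]; omega
    obtain ⟨i₀, hi₀, hmax⟩ := Finset.exists_max_image _ v hne
    have hi₀x : v i₀ < x := (Finset.mem_filter.mp hi₀).2
    have ht₀ : v i₀ ∈ {t : ℝ | k ≤ (Finset.univ.filter fun i => v i ≤ t).card} := by
      refine le_trans hcard (Finset.card_le_card ?_)
      intro i hi
      simp only [Finset.mem_filter, Finset.mem_univ, true_and] at hi ⊢
      exact hmax i (by simp [hi])
    have hbdd : BddBelow {t : ℝ | k ≤ (Finset.univ.filter fun i => v i ≤ t).card} := by
      refine ⟨(Finset.univ.image v).min' ⟨v ⟨0, hM⟩, Finset.mem_image_of_mem v (Finset.mem_univ _)⟩, ?_⟩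
      intro t ht
      have : (Finset.univ.filter fun i => v i ≤ t).Nonempty := by
        rw [← Finset.card_pos]
        exact lt_of_lt_of_le hk1 ht
      obtain ⟨i, hi⟩ := this
      have hvi : v i ≤ t := (Finset.mem_filter.mp hi).2
      exact le_trans (Finset.min'_le _ _ (Finset.mem_image_of_mem v (Finset.mem_univ i))) hvi
    have h1 : kthSmallest v k ≤ v i₀ := csInf_le hbdd ht₀
    linarith [le_trans hx h1]
  · intro hcard
    apply le_csInf
    · obtain ⟨i₀, -, hmax⟩ := Finset.exists_max_image (Finset.univ : Finset (Fin M)) v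
        ⟨⟨0, hM⟩, Finset.mem_univ _⟩
      refine ⟨v i₀, ?_⟩
      have : (Finset.univ.filter fun i => v i ≤ v i₀) = Finset.univ := by
        ext i; simp [hmax i (Finset.mem_univ i)]
      simp only [Set.mem_setOf_eq, this, Finset.card_univ, Fintype.card_fin]
      exact hkM
    · intro t ht
      by_contra h
      push_neg at h
      have hsub : (Finset.univ.filter fun i => v i ≤ t) ⊆ (Finset.univ.filter fun i => v i < x) := by
        intro i hi
        simp only [Finset.mem_filter, Finset.mem_univ, true_and] at hi ⊢
        linarith
      have := Finset.card_le_card hsub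
      have ht' : k ≤ (Finset.univ.filter fun i => v i ≤ t).card := ht
      omega

lemma card_rank_le {n : ℕ} (s : Fin n → ℝ) (hs : Function.Injective s) (k : ℕ) (hk : k ≤ n) :
    (Finset.univ.filter fun j => (Finset.univ.filter fun i => s i ≤ s j).card ≤ k).card = k := by
  set r : Fin n → ℕ := fun j => (Finset.univ.filter fun i => s i ≤ s j).card with hr
  have hmono : ∀ j1 j2, s j1 < s j2 → r j1 < r j2 := by
    intro j1 j2 h
    apply Finset.card_lt_card
    constructor
    · intro i hi
      simp only [Finset.mem_filter, Finset.mem_univ, true_and] at hi ⊢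
      linarith
    · intro hsub
      have : j2 ∈ Finset.univ.filter fun i => s i ≤ s j1 :=
        hsub (by simp)
      simp only [Finset.mem_filter, Finset.mem_univ, true_and] at this
      linarith
  have hinj : Function.Injective r := by
    intro j1 j2 hEq
    by_contra hne
    rcases lt_trichotomy (s j1) (s j2) with h | h | h
    · exact absurd hEq (Nat.ne_of_lt (hmono _ _ h))
    · exact hne (hs h)
    · exact absurd hEq.symm (Nat.ne_of_lt (hmono _ _ h))
  have himg : Finset.univ.image r = Finset.Icc 1 n := by
    apply Finset.eq_of_subset_of_card_le
    · intro m hm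
      obtain ⟨j, -, rfl⟩ := Finset.mem_image.mp hm
      rw [Finset.mem_Icc]
      constructor
      · have : j ∈ Finset.univ.filter fun i => s i ≤ s j := by simp
        exact Finset.card_pos.mpr ⟨j, this⟩
      · calc r j ≤ (Finset.univ : Finset (Fin n)).card := Finset.card_le_card (Finset.filter_subset _ _)
          _ = n := by simp
    · rw [Finset.card_image_of_injective _ hinj, Nat.card_Icc]
      simp
  have key : (Finset.univ.filter fun j => r j ≤ k).card
      = ((Finset.univ.filter fun j => r j ≤ k).image r).card :=
    (Finset.card_image_of_injective _ hinj).symm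
  rw [key]
  have : (Finset.univ.filter fun j => r j ≤ k).image r
      = (Finset.univ.image r).filter (fun m => m ≤ k) := by
    ext m
    simp only [Finset.mem_image, Finset.mem_filter, Finset.mem_univ, true_and]
    constructor
    · rintro ⟨j, hj, rfl⟩; exact ⟨⟨j, rfl⟩, hj⟩
    · rintro ⟨⟨j, rfl⟩, hj⟩; exact ⟨j, hj, rfl⟩
  rw [this, himg]
  have : (Finset.Icc 1 n).filter (fun m => m ≤ k) = Finset.Icc 1 k := by
    ext m
    simp only [Finset.mem_filter, Finset.mem_Icc]
    omega
  rw [this, Nat.card_Icc]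
  omega

/-- Split conformal coverage guarantee: for exchangeable, a.s. pairwise-distinct scores
`S₁, …, S_{M+1}`, the empirical `⌈(M+1)(1-α)⌉`-th smallest of the first `M` scores
covers `S_{M+1}` with probability between `1-α` and `1-α+1/(M+1)`. -/
theorem split_conformal_coverage {Ω : Type*} [MeasurableSpace Ω]
    (μ : Measure Ω) [IsProbabilityMeasure μ] (M : ℕ)
    (S : Fin (M + 1) → Ω → ℝ) (hmeas : ∀ i, Measurable (S i))
    (hexch : ∀ π : Equiv.Perm (Fin (M + 1)),
      Measure.map (fun ω => fun i => S (π i) ω) μ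
        = Measure.map (fun ω => fun i => S i ω) μ)
    (hdist : ∀ᵐ ω ∂μ, ∀ i j : Fin (M + 1), i ≠ j → S i ω ≠ S j ω)
    (α : ℝ) (hα : 1 / (M + 1 : ℝ) ≤ α) (hα' : α < 1) :
    let q : Ω → ℝ := fun ω =>
      kthSmallest (fun i : Fin M => S i.castSucc ω) ⌈((M : ℝ) + 1) * (1 - α)⌉₊
    1 - α ≤ (μ {ω | S (Fin.last M) ω ≤ q ω}).toReal ∧
    (μ {ω | S (Fin.last M) ω ≤ q ω}).toReal ≤ 1 - α + 1 / (M + 1 : ℝ) := by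
  intro q
  set k : ℕ := ⌈((M : ℝ) + 1) * (1 - α)⌉₊ with hk_def
  have hM1 : (0:ℝ) < (M:ℝ) + 1 := by positivity
  have hα0 : (1:ℝ) ≤ α * ((M:ℝ)+1) := (div_le_iff₀ hM1).mp hα
  have hk1 : 1 ≤ k := by
    rw [hk_def]
    exact Nat.ceil_pos.mpr (mul_pos hM1 (by linarith))
  have hkM : k ≤ M := by
    rw [hk_def]
    exact Nat.ceil_le.mpr (by nlinarith)
  -- rank machinery
  set F : Ω → (Fin (M+1) → ℝ) := fun ω i => S i ω with hF_def
  have hF : Measurable F := measurable_pi_lambda _ hmeas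
  set g : Fin (M+1) → (Fin (M+1) → ℝ) → ℕ :=
    fun j v => (Finset.univ.filter fun i => v i ≤ v j).card with hg_def
  have hg : ∀ j, Measurable (g j) := by
    intro j
    have h : g j = fun v => ∑ i, if v i ≤ v j then 1 else 0 := by
      funext v; exact Finset.card_filter _ _
    rw [h]
    exact Finset.measurable_sum _ fun i _ =>
      Measurable.ite (measurableSet_le (measurable_pi_apply i) (measurable_pi_apply j))
        measurable_const measurable_const
  set A : Fin (M+1) → Set Ω := fun j => {ω | g j (F ω) ≤ k} with hA_def
  have hAmeas : ∀ j, MeasurableSet (A j) := fun j => ((hg j).comp hF) measurableSet_Iic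
  -- exchangeability: all A j have the same measure
  have hB : ∀ j', MeasurableSet {v : Fin (M+1) → ℝ | g j' v ≤ k} := fun j' => hg j' measurableSet_Iic
  have hAeq : ∀ j, μ (A j) = μ (A (Fin.last M)) := by
    intro j
    set π : Equiv.Perm (Fin (M+1)) := Equiv.swap j (Fin.last M) with hπ
    have hπlast : π (Fin.last M) = j := Equiv.swap_apply_right _ _
    have h1 : ((fun ω => fun i => S (π i) ω) ⁻¹' {v | g (Fin.last M) v ≤ k}) = A j := by
      ext ω
      have hc : g (Fin.last M) (fun i => S (π i) ω) = g j (F ω) := by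
        simp only [hg_def, hF_def, hπlast]
        exact Finset.card_equiv π (fun i => by simp)
      simp only [Set.mem_preimage, Set.mem_setOf_eq, hA_def, hc]
    calc μ (A j) = μ ((fun ω => fun i => S (π i) ω) ⁻¹' {v | g (Fin.last M) v ≤ k}) := by rw [h1]
      _ = (Measure.map (fun ω => fun i => S (π i) ω) μ) {v | g (Fin.last M) v ≤ k} :=
          (Measure.map_apply (measurable_pi_lambda _ (fun i => hmeas (π i))) (hB _)).symm
      _ = (Measure.map F μ) {v | g (Fin.last M) v ≤ k} := by rw [hexch π]
      _ = μ (F ⁻¹' {v | g (Fin.last M) v ≤ k}) := Measure.map_apply hF (hB _)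
      _ = μ (A (Fin.last M)) := rfl
  -- a.s. the number of indices with rank ≤ k is exactly k
  have hcount : ∀ᵐ ω ∂μ, (Finset.univ.filter fun j => ω ∈ A j).card = k := by
    filter_upwards [hdist] with ω hω
    have hs : Function.Injective (fun i => S i ω) := by
      intro i j hij
      by_contra hne
      exact hω i j hne hij
    have h := card_rank_le (fun i => S i ω) hs k (le_trans hkM (Nat.le_succ M))
    convert h using 2
    ext j; simp [hA_def, hg_def, hF_def]
  have hsum : ∑ j : Fin (M+1), μ (A j) = (k : ℝ≥0∞) := by
    calc ∑ j : Fin (M+1), μ (A j)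
        = ∑ j : Fin (M+1), ∫⁻ ω, (A j).indicator (1 : Ω → ℝ≥0∞) ω ∂μ :=
          Finset.sum_congr rfl fun j _ => (lintegral_indicator_one (hAmeas j)).symm
      _ = ∫⁻ ω, ∑ j : Fin (M+1), (A j).indicator (1 : Ω → ℝ≥0∞) ω ∂μ :=
          (lintegral_finset_sum _ fun j _ => (measurable_one.indicator (hAmeas j))).symm
      _ = ∫⁻ _ω, (k : ℝ≥0∞) ∂μ := by
          apply lintegral_congr_ae
          filter_upwards [hcount] with ω hω
          have h2 : ∑ j : Fin (M+1), (A j).indicator (1 : Ω → ℝ≥0∞) ω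
              = ((Finset.univ.filter fun j => ω ∈ A j).card : ℝ≥0∞) := by
            rw [Finset.card_filter]
            push_cast
            refine Finset.sum_congr rfl fun j _ => ?_
            by_cases h : ω ∈ A j <;> simp [Set.indicator_apply, h]
          rw [h2, hω]
      _ = (k : ℝ≥0∞) := by simp
  have hμA : μ (A (Fin.last M)) = (k : ℝ≥0∞) / ((M : ℝ≥0∞) + 1) := by
    have h2 : ∑ j : Fin (M+1), μ (A j) = ((M : ℝ≥0∞) + 1) * μ (A (Fin.last M)) := by
      rw [Finset.sum_congr rfl fun j _ => hAeq j, Finset.sum_const, Finset.card_univ,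
        Fintype.card_fin, nsmul_eq_mul]
      push_cast
      ring
    rw [ENNReal.eq_div_iff (by simp) (by simp), ← h2, hsum]
  -- identify the coverage event
  have hset : {ω | S (Fin.last M) ω ≤ q ω}
      = {ω | (Finset.univ.filter fun i : Fin M => S i.castSucc ω < S (Fin.last M) ω).card < k} := by
    ext ω
    exact le_kthSmallest_iff (fun i : Fin M => S i.castSucc ω) k hk1 hkM (S (Fin.last M) ω)
  have hae : μ {ω | S (Fin.last M) ω ≤ q ω} = μ (A (Fin.last M)) := by
    rw [hset]
    apply measure_congr
    rw [Filter.eventuallyEq_set]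
    filter_upwards [hdist] with ω hω
    have hsplit : g (Fin.last M) (F ω)
        = (Finset.univ.filter fun i : Fin M => S i.castSucc ω < S (Fin.last M) ω).card + 1 := by
      have h1 : (Finset.univ.filter fun i : Fin (M+1) => S i ω ≤ S (Fin.last M) ω)
          = insert (Fin.last M)
            ((Finset.univ.filter fun i : Fin M =>
              S i.castSucc ω < S (Fin.last M) ω).image Fin.castSucc) := by
        ext i
        simp only [Finset.mem_filter, Finset.mem_univ, true_and, Finset.mem_insert,
          Finset.mem_image]
        constructor
        · intro hi
          rcases Fin.eq_castSucc_or_eq_last i with ⟨j, rfl⟩ | rfl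
          · right
            refine ⟨j, ?_, rfl⟩
            have hne : S (Fin.castSucc j) ω ≠ S (Fin.last M) ω :=
              hω _ _ (Fin.ne_of_lt (Fin.castSucc_lt_last j))
            exact lt_of_le_of_ne hi hne
          · left; rfl
        · rintro (rfl | ⟨j, hj, rfl⟩)
          · exact le_refl _
          · exact le_of_lt hj
      have hnm : Fin.last M ∉ (Finset.univ.filter fun i : Fin M =>
          S i.castSucc ω < S (Fin.last M) ω).image Fin.castSucc := by
        simp only [Finset.mem_image]
        rintro ⟨j, -, hj⟩
        exact (Fin.ne_of_lt (Fin.castSucc_lt_last j)) hj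
      show (Finset.univ.filter fun i : Fin (M+1) => S i ω ≤ S (Fin.last M) ω).card = _
      rw [h1, Finset.card_insert_of_notMem hnm,
        Finset.card_image_of_injective _ (Fin.castSucc_injective M)]
    simp only [Set.mem_setOf_eq, hA_def]
    rw [hsplit]
    omega
  rw [hae, hμA]
  have htr : ((k : ℝ≥0∞) / ((M : ℝ≥0∞) + 1)).toReal = (k : ℝ) / ((M : ℝ) + 1) := by
    rw [show ((M : ℝ≥0∞) + 1) = ((M+1 : ℕ) : ℝ≥0∞) by push_cast; ring, ENNReal.toReal_div,
      ENNReal.toReal_natCast, ENNReal.toReal_natCast]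
    push_cast; ring
  rw [htr]
  have hceil1 : ((M:ℝ)+1) * (1-α) ≤ (k:ℝ) := by rw [hk_def]; exact Nat.le_ceil _
  have hceil2 : (k:ℝ) < ((M:ℝ)+1) * (1-α) + 1 := by
    rw [hk_def]
    exact Nat.ceil_lt_add_one (mul_nonneg (by positivity) (by linarith))
  have hinv : (1/((M:ℝ)+1)) * ((M:ℝ)+1) = 1 := by field_simp
  constructor
  · rw [le_div_iff₀ hM1]; nlinarith
  · rw [div_le_iff₀ hM1]; nlinarith
end
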